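/- The complex number a·b has modulus 1, i.e. |a·b| = 1. -/

import Mathlib

/-!
The four roots of the monic quartic `X^4 + X + 1` multiply to its constant term `1`. None of
them is real (`x^4 + x + 1 > 0` on `ℝ`), so `a, conj a, b, conj b` are four distinct roots,
hence all of them, and `1 = a · conj a · b · conj b = ‖a b‖²`.
-/

open Polynomial

theorem Polynomial.Monic.coeff_zero_eq_prod_of_nodup_of_isRoot {R : Type*} [CommRing R]
    [IsDomain R] {p : R[X]} (hp : p.Monic) {s : Multiset R} (hs : s.Nodup)
    (hroot : ∀ x ∈ s, p.IsRoot x) (hcard : s.card = p.natDegree) :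
    p.coeff 0 = (-1) ^ p.natDegree * s.prod := by
  have hle : s ≤ p.roots :=
    (Multiset.le_iff_subset hs).2 fun x hx => (mem_roots hp.ne_zero).2 (hroot x hx)
  obtain rfl : s = p.roots := Multiset.eq_of_le_of_card_le hle (hcard ▸ card_roots' p)
  exact (splits_iff_card_roots.2 hcard).coeff_zero_eq_prod_roots_of_monic hp

section Quartic

variable {R : Type*} [CommRing R]

lemma isRoot_X_pow_four_add_X_add_one_iff {z : R} :
    (X ^ 4 + X + 1 : R[X]).IsRoot z ↔ z ^ 4 + z + 1 = 0 := by
  simp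

lemma monic_X_pow_four_add_X_add_one [Nontrivial R] : (X ^ 4 + X + 1 : R[X]).Monic := by
  monicity!

lemma natDegree_X_pow_four_add_X_add_one [Nontrivial R] :
    (X ^ 4 + X + 1 : R[X]).natDegree = 4 := by
  compute_degree!

lemma coeff_zero_X_pow_four_add_X_add_one : (X ^ 4 + X + 1 : R[X]).coeff 0 = 1 := by
  simp

lemma multiset_prod_eq_one_of_isRoot_X_pow_four_add_X_add_one [IsDomain R] {s : Multiset R}
    (hs : s.Nodup) (hroot : ∀ x ∈ s, (X ^ 4 + X + 1 : R[X]).IsRoot x) (hcard : s.card = 4) :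
    s.prod = 1 := by
  have h := monic_X_pow_four_add_X_add_one.coeff_zero_eq_prod_of_nodup_of_isRoot hs hroot
    (hcard.trans natDegree_X_pow_four_add_X_add_one.symm)
  rw [natDegree_X_pow_four_add_X_add_one, coeff_zero_X_pow_four_add_X_add_one] at h
  linear_combination -h

end Quartic

lemma pow_four_add_self_add_one_pos (x : ℝ) : 0 < x ^ 4 + x + 1 := by
  nlinarith [sq_nonneg (x ^ 2 - 1 / 2), sq_nonneg (x + 1 / 2)]

lemma conj_ne_self_of_isRoot_X_pow_four_add_X_add_one {z : ℂ}
    (hz : (X ^ 4 + X + 1 : ℂ[X]).IsRoot z) : starRingEnd ℂ z ≠ z := by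
  intro h
  obtain ⟨x, rfl⟩ := Complex.conj_eq_iff_real.1 h
  have hx : x ^ 4 + x + 1 = 0 := by exact_mod_cast isRoot_X_pow_four_add_X_add_one_iff.1 hz
  linarith [pow_four_add_self_add_one_pos x]

lemma isRoot_X_pow_four_add_X_add_one_conj {z : ℂ} (hz : (X ^ 4 + X + 1 : ℂ[X]).IsRoot z) :
    (X ^ 4 + X + 1 : ℂ[X]).IsRoot (starRingEnd ℂ z) := by
  rw [isRoot_X_pow_four_add_X_add_one_iff] at hz ⊢
  simpa using congrArg (starRingEnd ℂ) hz

/-- If `a` and `b` are complex roots of `X^4 + X + 1` with `b ≠ a` and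
`b ≠ conj a` (so the four roots are `a, conj a, b, conj b`), then `|a·b| = 1`. -/
theorem stmt_4 (a b : ℂ)
    (ha : (X ^ 4 + X + 1 : ℂ[X]).IsRoot a)
    (hb : (X ^ 4 + X + 1 : ℂ[X]).IsRoot b)
    (hba : b ≠ a) (hbconj : b ≠ (starRingEnd ℂ) a) :
    ‖a * b‖ = 1 := by
  have hnodup : (a ::ₘ starRingEnd ℂ a ::ₘ b ::ₘ {starRingEnd ℂ b}).Nodup := by
    have hcba : starRingEnd ℂ b ≠ a := fun h => hbconj (by rw [← h, Complex.conj_conj])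
    have hcacb : starRingEnd ℂ a ≠ starRingEnd ℂ b := (starRingEnd ℂ).injective.ne hba.symm
    simp [(conj_ne_self_of_isRoot_X_pow_four_add_X_add_one ha).symm,
      (conj_ne_self_of_isRoot_X_pow_four_add_X_add_one hb).symm,
      hba.symm, hbconj.symm, hcba.symm, hcacb]
  have hprod := multiset_prod_eq_one_of_isRoot_X_pow_four_add_X_add_one hnodup
    (by simp only [Multiset.forall_mem_cons, Multiset.mem_singleton, forall_eq]
        exact ⟨ha, isRoot_X_pow_four_add_X_add_one_conj ha, hb,
          isRoot_X_pow_four_add_X_add_one_conj hb⟩) rfl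
  have hnorm_sq : ((‖a * b‖ ^ 2 : ℝ) : ℂ) = 1 := by
    rw [norm_mul, mul_pow, Complex.ofReal_mul, Complex.ofReal_pow, Complex.ofReal_pow,
      ← Complex.mul_conj', ← Complex.mul_conj', ← hprod]
    simp only [Multiset.prod_cons, Multiset.prod_singleton]
    ring
  rw [← pow_eq_one_iff_of_nonneg (norm_nonneg _) two_ne_zero]
  exact_mod_cast hnorm_sq
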